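/- arXiv:2111.01605 — 3 statements merged into one kernel-verified Lean document; each statement's English description precedes it below -/
import Mathlib

section
/- Let c₁, c₂, r > 0, set c = c₁ + c₂, assume r ≥ c, and let w > 0 satisfy w·e^w = r·e/c (so w ≥ 1). Then β₁* = c₁/(c·w) is the unique maximizer of the function f(β₁) = (1 − β₁·c/c₁)·r·log(β₁·r/c₁) over the interval [c₁/r, c₁/c]; that is, f(β₁*) ≥ f(β₁) for all β₁ in [c₁/r, c₁/c], with equality only at β₁ = β₁*. -/
open Real Set

/- Writing `t = β₁ c / c₁ ∈ (0, 1]` and `R = r / c`, the objective is `r (1 - t) log (t R)`, and the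
defining equation of `w` reads `log R = w + log w - 1`. The tangent-line bound
`log (t w) ≤ t w - 1` then gives `(1 - t) log (t R) ≤ (1 - t) (t w + w - 2)`, a concave quadratic
in `t` equal to `(w - 1)² / w - w (t - 1/w)²`, whose maximum `(w - 1)² / w` is attained by the
objective itself at `t = 1/w`. -/

lemma log_eq_of_mul_exp_eq {w x : ℝ} (hw : 0 < w) (h : w * exp w = x * exp 1) :
    log x = w + log w - 1 := by
  have hx : x ≠ 0 := by rintro rfl; simp at h; linarith
  have := congrArg log h
  rw [log_mul hw.ne' (exp_pos w).ne', log_exp, log_mul hx (exp_pos 1).ne', log_exp] at this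
  linarith

lemma one_sub_mul_log_mul_add_sq_le {w R t : ℝ} (hw : 0 < w) (hR0 : R ≠ 0)
    (hR : log R = w + log w - 1) (ht0 : 0 < t) (ht1 : t ≤ 1) :
    (1 - t) * log (t * R) + w * (t - w⁻¹) ^ 2 ≤ (1 - w⁻¹) * log (w⁻¹ * R) := by
  have hlog_opt : log (w⁻¹ * R) = w - 1 := by
    rw [log_mul (inv_ne_zero hw.ne') hR0, log_inv, hR]; ring
  have hlog_le : log (t * R) ≤ t * w + w - 2 := by
    have hlog_tw : log (t * w) ≤ t * w - 1 := log_le_sub_one_of_pos (by positivity)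
    rw [log_mul ht0.ne' hR0, hR, ← add_sub_cancel_right (log t) (log w), ← log_mul ht0.ne' hw.ne']
    linarith
  calc (1 - t) * log (t * R) + w * (t - w⁻¹) ^ 2
      ≤ (1 - t) * (t * w + w - 2) + w * (t - w⁻¹) ^ 2 := by gcongr
    _ = (1 - w⁻¹) * log (w⁻¹ * R) := by rw [hlog_opt]; field_simp; ring

theorem stmt_4_general (c₁ c₂ r c w : ℝ) (hc₁ : 0 < c₁) (hc₂ : 0 < c₂) (hr : 0 < r)
    (hc : c = c₁ + c₂) (hw : 0 < w)
    (hW : w * Real.exp w = r * Real.exp 1 / c) :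
    (∀ β₁ ∈ Set.Icc (c₁ / r) (c₁ / c),
        (1 - β₁ * c / c₁) * r * Real.log (β₁ * r / c₁) ≤
          (1 - (c₁ / (c * w)) * c / c₁) * r * Real.log ((c₁ / (c * w)) * r / c₁)) ∧
    (∀ β₁ ∈ Set.Icc (c₁ / r) (c₁ / c),
        (1 - β₁ * c / c₁) * r * Real.log (β₁ * r / c₁) =
          (1 - (c₁ / (c * w)) * c / c₁) * r * Real.log ((c₁ / (c * w)) * r / c₁) →
        β₁ = c₁ / (c * w)) := by
  have hc0 : 0 < c := hc ▸ add_pos hc₁ hc₂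
  have hR : log (r / c) = w + log w - 1 :=
    log_eq_of_mul_exp_eq hw (by rw [hW]; ring)
  have reparam : ∀ β : ℝ, (1 - β * c / c₁) * r * log (β * r / c₁)
      = r * ((1 - β * c / c₁) * log (β * c / c₁ * (r / c))) := fun β ↦ by
    field_simp
  have hopt : c₁ / (c * w) * c / c₁ = w⁻¹ := by field_simp
  have key : ∀ β ∈ Icc (c₁ / r) (c₁ / c),
      (1 - β * c / c₁) * r * log (β * r / c₁) + r * (w * (β * c / c₁ - w⁻¹) ^ 2)
        ≤ (1 - c₁ / (c * w) * c / c₁) * r * log (c₁ / (c * w) * r / c₁) := by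
    rintro β ⟨hβ_lo, hβ_hi⟩
    have hβ : 0 < β := (div_pos hc₁ hr).trans_le hβ_lo
    have ht1 : β * c / c₁ ≤ 1 := by rw [le_div_iff₀ hc0] at hβ_hi; rwa [div_le_one hc₁]
    rw [reparam, reparam, hopt, ← mul_add]
    exact mul_le_mul_of_nonneg_left (one_sub_mul_log_mul_add_sq_le hw (by positivity) hR
      (by positivity) ht1) hr.le
  refine ⟨fun β hβ ↦ ?_, fun β hβ heq ↦ ?_⟩
  · have hgap : 0 ≤ r * (w * (β * c / c₁ - w⁻¹) ^ 2) := by positivity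
    linarith [key β hβ]
  · have hsq : (β * c / c₁ - w⁻¹) ^ 2 = 0 := by
      nlinarith [key β hβ, sq_nonneg (β * c / c₁ - w⁻¹), mul_pos hr hw]
    rw [sq_eq_zero_iff, sub_eq_zero] at hsq
    field_simp at hsq ⊢
    linarith

/-- `β₁* = c₁ / (c * w)` is the unique maximizer of
`f β₁ = (1 - β₁ * c / c₁) * r * log (β₁ * r / c₁)` over `[c₁ / r, c₁ / c]`,
where `c = c₁ + c₂`, `r ≥ c` and `w > 0` solves `w * exp w = r * e / c`. -/
theorem stmt_4 (c₁ c₂ r c w : ℝ) (hc₁ : 0 < c₁) (hc₂ : 0 < c₂) (hr : 0 < r)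
    (hc : c = c₁ + c₂) (hrc : c ≤ r) (hw : 0 < w)
    (hW : w * Real.exp w = r * Real.exp 1 / c) :
    (∀ β₁ ∈ Set.Icc (c₁ / r) (c₁ / c),
        (1 - β₁ * c / c₁) * r * Real.log (β₁ * r / c₁) ≤
          (1 - (c₁ / (c * w)) * c / c₁) * r * Real.log ((c₁ / (c * w)) * r / c₁)) ∧
    (∀ β₁ ∈ Set.Icc (c₁ / r) (c₁ / c),
        (1 - β₁ * c / c₁) * r * Real.log (β₁ * r / c₁) =
          (1 - (c₁ / (c * w)) * c / c₁) * r * Real.log ((c₁ / (c * w)) * r / c₁) →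
        β₁ = c₁ / (c * w)) :=
  stmt_4_general c₁ c₂ r c w hc₁ hc₂ hr hc hw hW
end

section
/- Let c₂, r > 0 with r ≥ c₂, and let w > 0 satisfy w·e^w = r·e/c₂ (so w ≥ 1). Then β* = 1/w is the unique maximizer of the function g(β) = (1 − β)·r·log(β·r/c₂) over the interval [c₂/r, 1]; that is, g(β*) ≥ g(β) for all β in [c₂/r, 1], with equality only at β = β*. -/
lemma stmt_9_aux (c₂ r w : ℝ) (hc₂ : 0 < c₂) (hr : 0 < r) (hw : 0 < w)
    (hW : w * Real.exp w = r * Real.exp 1 / c₂) (β : ℝ) (hβ : β ∈ Set.Icc (c₂ / r) 1) :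
    (1 - 1/w) * r * Real.log ((1/w) * r / c₂) - (1 - β) * r * Real.log (β * r / c₂)
      = r * ((1 - β) * ((w*β - 1) - Real.log (w*β)) + (w*β - 1)^2 / w) := by
  obtain ⟨hβl, hβu⟩ := hβ
  have hβpos : 0 < β := lt_of_lt_of_le (div_pos hc₂ hr) hβl
  -- log identity: log r - log c₂ = log w + w - 1
  have hkey : Real.log r - Real.log c₂ = Real.log w + w - 1 := by
    have h1 : Real.log (w * Real.exp w) = Real.log (r * Real.exp 1 / c₂) := by rw [hW]
    rw [Real.log_mul hw.ne' (Real.exp_ne_zero w), Real.log_exp,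
        Real.log_div (by positivity) hc₂.ne', Real.log_mul hr.ne' (Real.exp_ne_zero 1),
        Real.log_exp] at h1
    linarith
  have e1 : Real.log (β * r / c₂) = Real.log β + Real.log w + w - 1 := by
    rw [Real.log_div (by positivity) hc₂.ne', Real.log_mul hβpos.ne' hr.ne']
    linarith
  have e2 : Real.log ((1/w) * r / c₂) = w - 1 := by
    rw [Real.log_div (by positivity) hc₂.ne', Real.log_mul (by positivity) hr.ne',
        Real.log_div one_ne_zero hw.ne', Real.log_one]
    linarith
  have e3 : Real.log (w * β) = Real.log w + Real.log β := Real.log_mul hw.ne' hβpos.ne'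
  rw [e1, e2, e3]
  field_simp
  ring

/-- `β* = 1 / w` is the unique maximizer of `g β = (1 - β) * r * log (β * r / c₂)`
over `[c₂ / r, 1]`, where `r ≥ c₂` and `w > 0` solves `w * exp w = r * e / c₂`. -/
theorem stmt_9 (c₂ r w : ℝ) (hc₂ : 0 < c₂) (hr : 0 < r) (hrc : c₂ ≤ r) (hw : 0 < w)
    (hW : w * Real.exp w = r * Real.exp 1 / c₂) :
    (∀ β ∈ Set.Icc (c₂ / r) 1,
        (1 - β) * r * Real.log (β * r / c₂) ≤
          (1 - 1 / w) * r * Real.log ((1 / w) * r / c₂)) ∧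
    (∀ β ∈ Set.Icc (c₂ / r) 1,
        (1 - β) * r * Real.log (β * r / c₂) =
          (1 - 1 / w) * r * Real.log ((1 / w) * r / c₂) →
        β = 1 / w) := by
  have main : ∀ β ∈ Set.Icc (c₂ / r) 1,
      (1 - β) * ((w*β - 1) - Real.log (w*β)) ≥ 0 ∧ 0 < β := by
    intro β hβ
    obtain ⟨hβl, hβu⟩ := hβ
    have hβpos : 0 < β := lt_of_lt_of_le (div_pos hc₂ hr) hβl
    have hlog := Real.log_le_sub_one_of_pos (mul_pos hw hβpos)
    exact ⟨mul_nonneg (by linarith) (by linarith), hβpos⟩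
  constructor
  · intro β hβ
    have hid := stmt_9_aux c₂ r w hc₂ hr hw hW β hβ
    obtain ⟨h1, h2⟩ := main β hβ
    nlinarith [mul_nonneg hr.le h1, div_nonneg (sq_nonneg (w*β-1)) hw.le,
      mul_nonneg hr.le (div_nonneg (sq_nonneg (w*β-1)) hw.le)]
  · intro β hβ heq
    have hid := stmt_9_aux c₂ r w hc₂ hr hw hW β hβ
    obtain ⟨h1, h2⟩ := main β hβ
    have hz : (w*β - 1)^2 ≤ 0 := by
      by_contra h
      push_neg at h
      have h3 := mul_pos hr (div_pos h hw)
      nlinarith [mul_nonneg hr.le h1]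
    have : w*β - 1 = 0 := by nlinarith [sq_nonneg (w*β - 1)]
    field_simp
    linarith
end

section
/- Let c₂, r > 0 with r ≥ c₂, and let w > 0 satisfy w·e^w = r·e/c₂. Then β = 1/w satisfies the first-order optimality condition of the CP's reduced problem: log(β·r/c₂) = (1 − β)/β, i.e. β·log(β·r/c₂) + β = 1. -/
open Real

theorem log_div_eq_sub_one_of_mul_exp_eq {w x : ℝ} (hw : w ≠ 0)
    (h : w * exp w = x * exp 1) : log (x / w) = w - 1 := by
  have hdiv : x / w = exp (w - 1) := by
    rw [exp_sub, div_eq_div_iff hw (exp_ne_zero 1), ← h]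
    ring
  rw [hdiv, log_exp]

theorem stmt_17_general (c₂ r w : ℝ) (hw : 0 < w)
    (hW : w * Real.exp w = r * Real.exp 1 / c₂) :
    Real.log ((1 / w) * r / c₂) = (1 - 1 / w) / (1 / w) ∧
    (1 / w) * Real.log ((1 / w) * r / c₂) + 1 / w = 1 := by
  have hlog : log ((1 / w) * r / c₂) = w - 1 := by
    rw [show (1 / w) * r / c₂ = r / c₂ / w by ring]
    exact log_div_eq_sub_one_of_mul_exp_eq hw.ne' (by rw [hW]; ring)
  rw [hlog]
  constructor
  · field_simp
  · field_simp
    ring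

/-- `β = 1 / w` satisfies the first-order condition of the CP's reduced problem:
`log (β * r / c₂) = (1 - β) / β`, i.e. `β * log (β * r / c₂) + β = 1`. -/
theorem stmt_17 (c₂ r w : ℝ) (hc₂ : 0 < c₂) (hr : 0 < r) (hrc : c₂ ≤ r) (hw : 0 < w)
    (hW : w * Real.exp w = r * Real.exp 1 / c₂) :
    Real.log ((1 / w) * r / c₂) = (1 - 1 / w) / (1 / w) ∧
    (1 / w) * Real.log ((1 / w) * r / c₂) + 1 / w = 1 :=
  stmt_17_general c₂ r w hw hW
end
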